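/- For n ≥ 7, there exists an acyclic orientation of the square of the cycle C_n with exactly ⌈n/2⌉ + 1 dependent arcs. -/

import Mathlib

open SimpleGraph

variable {V : Type*}

/-- An orientation of a simple graph: each edge gets exactly one direction. -/
structure GraphOrientation {V : Type*} (G : SimpleGraph V) where
  rel : V → V → Prop
  sub : ∀ ⦃u v⦄, rel u v → G.Adj u v
  cover : ∀ ⦃u v⦄, G.Adj u v → rel u v ∨ rel v u
  asymm : ∀ ⦃u v⦄, rel u v → ¬ rel v u

/-- An orientation is acyclic if it has no directed cycle. -/
def GraphOrientation.Acyclic {G : SimpleGraph V} (D : GraphOrientation G) : Prop :=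
  ∀ v, ¬ Relation.TransGen D.rel v v

/-- An arc `u → v` of an acyclic orientation is dependent iff its reversal creates a
directed cycle, equivalently there is another directed path from `u` to `v`. -/
def GraphOrientation.Dep {G : SimpleGraph V} (D : GraphOrientation G) (u v : V) : Prop :=
  D.rel u v ∧ Relation.TransGen (fun a b => D.rel a b ∧ ¬(a = u ∧ b = v)) u v

/-- The set of dependent arcs of an orientation. -/
def GraphOrientation.depArcs {G : SimpleGraph V} (D : GraphOrientation G) : Set (V × V) :=
  {p | D.Dep p.1 p.2}

/-- The number of dependent arcs. -/
noncomputable def depCount {G : SimpleGraph V} (D : GraphOrientation G) : ℕ :=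
  D.depArcs.ncard

/-- Minimum number of dependent arcs over all acyclic orientations. -/
noncomputable def dmin (G : SimpleGraph V) : ℕ :=
  sInf {k | ∃ D : GraphOrientation G, D.Acyclic ∧ depCount D = k}

/-- Maximum number of dependent arcs over all acyclic orientations. -/
noncomputable def dmax (G : SimpleGraph V) : ℕ :=
  sSup {k | ∃ D : GraphOrientation G, D.Acyclic ∧ depCount D = k}

/-- Minimum number of edges whose deletion makes `G` triangle-free. -/
noncomputable def piT (G : SimpleGraph V) : ℕ :=
  sInf {k | ∃ S : Set (Sym2 V), S ⊆ G.edgeSet ∧ S.ncard = k ∧ (G.deleteEdges S).CliqueFree 3}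

/-- The square of the cycle `C_n` on vertices `ZMod n`. -/
def cycleSq (n : ℕ) : SimpleGraph (ZMod n) where
  Adj u v := u ≠ v ∧ (u - v = 1 ∨ v - u = 1 ∨ u - v = 2 ∨ v - u = 2)
  symm := ⟨by intro u v h; exact ⟨h.1.symm, by tauto⟩⟩
  loopless := ⟨by intro u h; exact h.1 rfl⟩

/-!
Order the vertices as `0, 1`, then the even vertices downwards, then the odd vertices downwards,
and for odd `n` finally `n - 1`, and orient every edge upwards; such an orientation is acyclic.
An arc `u → v` is dependent iff another out-neighbour `w` of `u` reaches `v`. Computing, for each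
vertex, the set of vertices it reaches shows that the dependent arcs are `0 → 2`, `0 → n - 1`,
`1 → 3`, `a → a - 1` for even `4 ≤ a ≤ n - 2`, and for odd `n` also `n - 3 → n - 1`:
`⌈n/2⌉ + 1` arcs in all.
-/

namespace GraphOrientation

variable {G : SimpleGraph V}

def ofRank (G : SimpleGraph V) (r : V → ℕ) (hr : ∀ ⦃u v⦄, G.Adj u v → r u ≠ r v) :
    GraphOrientation G where
  rel u v := G.Adj u v ∧ r u < r v
  sub _ _ h := h.1
  cover _ _ h := (hr h).lt_or_gt.imp (⟨h, ·⟩) (⟨h.symm, ·⟩)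
  asymm _ _ h h' := lt_asymm h.2 h'.2

theorem ofRank_acyclic (r : V → ℕ) (hr : ∀ ⦃u v⦄, G.Adj u v → r u ≠ r v) :
    (ofRank G r hr).Acyclic := by
  intro v h
  have hlt : Relation.TransGen (· < ·) (r v) (r v) := h.lift r fun _ _ h => h.2
  rw [Relation.transGen_eq_self] at hlt
  exact lt_irrefl _ hlt

theorem dep_of_rel_of_rel (D : GraphOrientation G) {u v w : V} (huw : D.rel u w)
    (hwv : D.rel w v) (huv : D.rel u v) : D.Dep u v :=
  ⟨huv, .head ⟨huw, fun h => (D.sub hwv).ne h.2⟩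
    (.single ⟨hwv, fun h => (D.sub huw).ne h.1.symm⟩)⟩

theorem Dep.exists_detour {D : GraphOrientation G} {u v : V} (h : D.Dep u v) :
    ∃ w, D.rel u w ∧ w ≠ v ∧ Relation.TransGen D.rel w v := by
  obtain ⟨w, ⟨huw, hne⟩, hwv⟩ := Relation.TransGen.head'_iff.mp h.2
  have hwv' : w ≠ v := fun h => hne ⟨rfl, h⟩
  refine ⟨w, huw, hwv', ?_⟩
  rcases Relation.reflTransGen_iff_eq_or_transGen.mp hwv with rfl | hwv
  · exact absurd rfl hwv'
  · exact Relation.TransGen.mono (fun _ _ h => h.1) _ _ hwv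

end GraphOrientation

theorem ZMod.sub_eq_natCast_iff {n k : ℕ} [NeZero n] (hk : k < n) {u v : ZMod n} :
    u - v = k ↔ u.val = (v.val + k) % n := by
  rw [sub_eq_iff_eq_add, ← (ZMod.val_injective n).eq_iff, ZMod.val_add,
    ZMod.val_natCast_of_lt hk, add_comm k]

theorem Nat.eq_add_mod_iff {n a b k : ℕ} (ha : a < n) (hb : b < n) (hk : k < n) :
    a = (b + k) % n ↔ a = b + k ∨ a + n = b + k := by
  rcases lt_or_ge (b + k) n with h | h
  · rw [Nat.mod_eq_of_lt h]; omega
  · rw [Nat.mod_eq_sub_mod h, Nat.mod_eq_of_lt (by omega)]; omega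

namespace CycleSq

variable {n a b c w : ℕ}

def Near (n a b : ℕ) : Prop :=
  b = a + 1 ∨ a = b + 1 ∨ b = a + 2 ∨ a = b + 2 ∨ (a = 0 ∧ n ≤ b + 2) ∨ (b = 0 ∧ n ≤ a + 2) ∨
    (a = 1 ∧ b + 1 = n) ∨ (b = 1 ∧ a + 1 = n)

theorem _root_.cycleSq_adj_iff (hn : 5 ≤ n) {u v : ZMod n} :
    (cycleSq n).Adj u v ↔ Near n u.val v.val := by
  have : NeZero n := ⟨by omega⟩
  have hu := u.val_lt
  have hv := v.val_lt
  change u ≠ v ∧ _ ↔ _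
  rw [show (1 : ZMod n) = ((1 : ℕ) : ZMod n) by norm_cast,
    show (2 : ZMod n) = ((2 : ℕ) : ZMod n) by norm_cast, ZMod.sub_eq_natCast_iff (by omega),
    ZMod.sub_eq_natCast_iff (by omega), ZMod.sub_eq_natCast_iff (by omega),
    ZMod.sub_eq_natCast_iff (by omega), Nat.eq_add_mod_iff hu hv (by omega),
    Nat.eq_add_mod_iff hv hu (by omega), Nat.eq_add_mod_iff hu hv (by omega),
    Nat.eq_add_mod_iff hv hu (by omega), ne_eq, ← (ZMod.val_injective n).eq_iff]
  unfold Near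
  omega

def rank (n a : ℕ) : ℕ :=
  if a = 0 then 0
  else if a = 1 then 1
  else if n % 2 = 1 ∧ a = n - 1 then 2 * n
  else if a % 2 = 0 then n + 2 - a
  else 2 * n + 1 - a

theorem rank_injOn : Set.InjOn (rank n) (Set.Iio n) := by
  intro a ha b hb h
  simp only [Set.mem_Iio] at ha hb
  unfold rank at h
  split_ifs at h <;> omega

/- The arcs, listed by their tail. Equivalent to `Near n a b ∧ rank n a < rank n b`
(`orientation_rel_iff`), but its case split keeps the `omega` calls below small. -/
def Out (n a b : ℕ) : Prop :=
  if a = 0 then b = 1 ∨ b = 2 ∨ b + 2 = n ∨ b + 1 = n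
  else if a = 1 then b = 2 ∨ b = 3 ∨ b + 1 = n
  else if a % 2 = 0 then
    a + 2 ≤ n ∧ ((b + 2 = a ∧ 2 ≤ b) ∨ (b + 1 = a ∧ 3 ≤ b) ∨ b = a + 1 ∨
      (n % 2 = 1 ∧ a + 3 = n ∧ b + 1 = n))
  else (b + 2 = a ∧ 3 ≤ b) ∨ (n % 2 = 1 ∧ a + 2 = n ∧ b + 1 = n)

theorem Out.near (hn : 7 ≤ n) (ha : a < n) (h : Out n a b) : Near n a b := by
  unfold Out at h
  unfold Near
  split_ifs at h <;> omega

theorem Out.rank_lt (hn : 7 ≤ n) (ha : a < n) (h : Out n a b) : rank n a < rank n b := by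
  unfold Out at h
  unfold rank
  split_ifs at h ⊢ <;> omega

set_option maxHeartbeats 1600000 in
theorem Near.out_or_out (hn : 7 ≤ n) (ha : a < n) (hb : b < n) (h : Near n a b) :
    Out n a b ∨ Out n b a := by
  unfold Near at h
  unfold Out
  split_ifs <;> omega

def Reach (n a b : ℕ) : Prop :=
  if a = 0 then 0 < b
  else if a = 1 then
    if n % 2 = 0 then b = 2 ∨ (b % 2 = 1 ∧ 3 ≤ b ∧ b < n)
    else b = 2 ∨ b = 3 ∨ b + 1 = n
  else if a % 2 = 0 then
    a + 2 ≤ n ∧ ((b % 2 = 0 ∧ 2 ≤ b ∧ b < a) ∨ (b % 2 = 1 ∧ 3 ≤ b ∧ b ≤ a + 1) ∨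
      (n % 2 = 1 ∧ a + 3 = n ∧ b + 1 = n))
  else
    3 ≤ a ∧ a < n ∧ ((b % 2 = 1 ∧ 3 ≤ b ∧ b < a) ∨ (n % 2 = 1 ∧ a + 2 = n ∧ b + 1 = n))

theorem Out.reach (hn : 7 ≤ n) (ha : a < n) (h : Out n a b) : Reach n a b := by
  unfold Out at h
  unfold Reach
  split_ifs at h ⊢ <;> omega

set_option maxHeartbeats 1600000 in
theorem Reach.trans_out (hn : 7 ≤ n) (hc : c < n) (h : Reach n a c) (hcb : Out n c b) :
    Reach n a b := by
  unfold Out at hcb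
  unfold Reach at h ⊢
  split_ifs at h hcb ⊢ <;> omega

def IsDepPair (n a b : ℕ) : Prop :=
  if a = 0 then b = 2 ∨ b + 1 = n
  else if a = 1 then b = 3
  else if a % 2 = 0 then
    (4 ≤ a ∧ a + 2 ≤ n ∧ b + 1 = a) ∨ (n % 2 = 1 ∧ a + 3 = n ∧ b + 1 = n)
  else False

set_option maxHeartbeats 1600000 in
theorem isDepPair_of_out_of_reach (hn : 7 ≤ n) (ha : a < n) (hab : Out n a b)
    (haw : Out n a w) (hw : Reach n w b) : IsDepPair n a b := by
  unfold Out at hab haw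
  unfold Reach at hw
  unfold IsDepPair
  split_ifs at hab haw hw ⊢ <;> omega

theorem IsDepPair.exists_out_out (hn : 7 ≤ n) (h : IsDepPair n a b) :
    Out n a b ∧ ∃ w < n, Out n a w ∧ Out n w b := by
  unfold IsDepPair at h
  split_ifs at h
  · rcases h with h | h
    · refine ⟨?_, 1, by omega, ?_, ?_⟩ <;>
        unfold Out <;> split_ifs <;> first | contradiction | omega
    · refine ⟨?_, n - 2, by omega, ?_, ?_⟩ <;>
        unfold Out <;> split_ifs <;> first | contradiction | omega
  · refine ⟨?_, 2, by omega, ?_, ?_⟩ <;>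
      unfold Out <;> split_ifs <;> first | contradiction | omega
  · rcases h with h | h
    · refine ⟨?_, a + 1, by omega, ?_, ?_⟩ <;>
        unfold Out <;> split_ifs <;> first | contradiction | omega
    · refine ⟨?_, n - 2, by omega, ?_, ?_⟩ <;>
        unfold Out <;> split_ifs <;> first | contradiction | omega

theorem IsDepPair.lt (hn : 7 ≤ n) (h : IsDepPair n a b) : a < n ∧ b < n := by
  unfold IsDepPair at h
  split_ifs at h <;> omega

def depPair (n i : ℕ) : ℕ × ℕ :=
  if i = 0 then (0, 2) else if i = 1 then (1, 3) else if i = 2 then (0, n - 1)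
  else if i ≤ n / 2 then (2 * i - 2, 2 * i - 3) else (n - 3, n - 1)

theorem depPair_eq_iff {i : ℕ} :
    depPair n i = (a, b) ↔
      (i = 0 ∧ a = 0 ∧ b = 2) ∨ (i = 1 ∧ a = 1 ∧ b = 3) ∨ (i = 2 ∧ a = 0 ∧ b = n - 1) ∨
      (3 ≤ i ∧ i ≤ n / 2 ∧ a = 2 * i - 2 ∧ b = 2 * i - 3) ∨
      (3 ≤ i ∧ n / 2 < i ∧ a = n - 3 ∧ b = n - 1) := by
  unfold depPair
  split_ifs <;> simp only [Prod.mk.injEq] <;> omega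

theorem ncard_isDepPair (hn : 7 ≤ n) :
    {p : ℕ × ℕ | IsDepPair n p.1 p.2}.ncard = (n + 1) / 2 + 1 := by
  refine Set.ncard_eq_of_bijective (fun i _ => depPair n i) ?_ ?_ ?_
  · rintro ⟨a, b⟩ h
    change IsDepPair n a b at h
    unfold IsDepPair at h
    split_ifs at h
    · rcases h with h | h
      · exact ⟨0, by omega, depPair_eq_iff.2 (by omega)⟩
      · exact ⟨2, by omega, depPair_eq_iff.2 (by omega)⟩
    · exact ⟨1, by omega, depPair_eq_iff.2 (by omega)⟩
    · rcases h with h | h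
      · exact ⟨a / 2 + 1, by omega, depPair_eq_iff.2 (by omega)⟩
      · exact ⟨n / 2 + 1, by omega, depPair_eq_iff.2 (by omega)⟩
  · intro i hi
    rcases hp : depPair n i with ⟨a, b⟩
    have := depPair_eq_iff.1 hp
    change IsDepPair n a b
    unfold IsDepPair
    split_ifs <;> omega
  · intro i j hi hj h
    rcases hp : depPair n j with ⟨a, b⟩
    have := depPair_eq_iff.1 hp
    have := depPair_eq_iff.1 (h.trans hp)
    omega

def orientation (n : ℕ) [NeZero n] : GraphOrientation (cycleSq n) :=
  GraphOrientation.ofRank (cycleSq n) (fun u => rank n u.val) fun _ _ h hr =>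
    h.1 (ZMod.val_injective n (rank_injOn (ZMod.val_lt _) (ZMod.val_lt _) hr))

variable [NeZero n]

theorem orientation_rel_iff (hn : 7 ≤ n) {u v : ZMod n} :
    (orientation n).rel u v ↔ Out n u.val v.val := by
  change (cycleSq n).Adj u v ∧ _ ↔ _
  rw [cycleSq_adj_iff (by omega)]
  refine ⟨fun ⟨hnear, hlt⟩ => ?_, fun h => ⟨h.near hn u.val_lt, h.rank_lt hn u.val_lt⟩⟩
  exact (hnear.out_or_out hn u.val_lt v.val_lt).resolve_right
    fun h => lt_asymm hlt (h.rank_lt hn v.val_lt)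

theorem reach_of_transGen (hn : 7 ≤ n) {u v : ZMod n}
    (h : Relation.TransGen (orientation n).rel u v) : Reach n u.val v.val := by
  induction h with
  | single h => exact ((orientation_rel_iff hn).1 h).reach hn u.val_lt
  | tail _ h ih => exact ih.trans_out hn (ZMod.val_lt _) ((orientation_rel_iff hn).1 h)

theorem orientation_dep_iff (hn : 7 ≤ n) {u v : ZMod n} :
    (orientation n).Dep u v ↔ IsDepPair n u.val v.val := by
  refine ⟨fun h => ?_, fun h => ?_⟩
  · obtain ⟨w, huw, -, hwv⟩ := h.exists_detour
    exact isDepPair_of_out_of_reach hn u.val_lt ((orientation_rel_iff hn).1 h.1)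
      ((orientation_rel_iff hn).1 huw) (reach_of_transGen hn hwv)
  · obtain ⟨huv, w, hw, huw, hwv⟩ := h.exists_out_out hn
    have hw' : (w : ZMod n).val = w := ZMod.val_natCast_of_lt hw
    have hrel {a b : ZMod n} : Out n a.val b.val → (orientation n).rel a b :=
      (orientation_rel_iff hn).2
    exact (orientation n).dep_of_rel_of_rel (w := w) (hrel (by rwa [hw'])) (hrel (by rwa [hw']))
      (hrel huv)

theorem ncard_depArcs_orientation (hn : 7 ≤ n) :
    (orientation n).depArcs.ncard = (n + 1) / 2 + 1 := by
  have hdep : (orientation n).depArcs =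
      Prod.map ZMod.val ZMod.val ⁻¹' {p : ℕ × ℕ | IsDepPair n p.1 p.2} :=
    Set.ext fun _ => orientation_dep_iff hn
  have hrange : {p : ℕ × ℕ | IsDepPair n p.1 p.2} ⊆
      Set.range (Prod.map (ZMod.val : ZMod n → ℕ) (ZMod.val : ZMod n → ℕ)) := by
    rintro ⟨a, b⟩ h
    obtain ⟨ha, hb⟩ := h.lt hn
    exact ⟨(a, b), by simp [ZMod.val_natCast_of_lt ha, ZMod.val_natCast_of_lt hb]⟩
  rw [hdep, Set.ncard_preimage_of_injective_subset_range
    ((ZMod.val_injective n).prodMap (ZMod.val_injective n)) hrange, ncard_isDepPair hn]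

end CycleSq

/-- For `n ≥ 7`, there is an acyclic orientation of `C_n^2` with exactly
`⌈n/2⌉ + 1` dependent arcs. -/
theorem stmt9 (n : ℕ) (hn : 7 ≤ n) :
    ∃ D : GraphOrientation (cycleSq n), D.Acyclic ∧ depCount D = (n + 1) / 2 + 1 := by
  have : NeZero n := ⟨by omega⟩
  exact ⟨CycleSq.orientation n, GraphOrientation.ofRank_acyclic _ _,
    CycleSq.ncard_depArcs_orientation hn⟩
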